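/- Permutation invariance of the decoded FACTS output: let k, m, d, n, t ∈ ℕ, let Ā, B̄, U, C̄ : ℝ^{k×d} × ℝ^{m×d} → ℝ^{k×d} each be left permutation equivariant (L.P.E.) and right permutation invariant (R.P.I.), and let Dec : ℝ^{k×d} → ℝ^n be permutation invariant, i.e. Dec(σ Z) = Dec(Z) for all σ ∈ S_k. Given Z_0 ∈ ℝ^{k×d} and X_1, …, X_t ∈ ℝ^{m×d}, define Z_s = Ā(Z_0, X_s) ⊙ Z_{s-1} + B̄(Z_0, X_s) ⊙ U(Z_0, X_s) for s = 1, …, t and the output y_t = Dec(C̄(Z_0, X_t) ⊙ Z_t). Then for every σ_Z ∈ S_k and all σ_X^1, …, σ_X^t ∈ S_m, the output produced by the same model run from initial memory σ_Z Z_0 on inputs σ_X^1 X_1, …, σ_X^t X_t equals y_t. -/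

import Mathlib

open Matrix
open scoped Matrix

/-- `f` is left permutation equivariant: `f (σ Z) X = σ (f Z X)` for every
permutation matrix `σ ∈ S_k`. -/
def LPE {k m d : ℕ}
    (f : Matrix (Fin k) (Fin d) ℝ → Matrix (Fin m) (Fin d) ℝ → Matrix (Fin k) (Fin d) ℝ) :
    Prop :=
  ∀ (σ : Equiv.Perm (Fin k)) (Z : Matrix (Fin k) (Fin d) ℝ) (X : Matrix (Fin m) (Fin d) ℝ),
    f (σ.permMatrix ℝ * Z) X = σ.permMatrix ℝ * f Z X

/-- `f` is right permutation invariant: `f Z (τ X) = f Z X` for every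
permutation matrix `τ ∈ S_m`. -/
def RPI {k m d : ℕ}
    (f : Matrix (Fin k) (Fin d) ℝ → Matrix (Fin m) (Fin d) ℝ → Matrix (Fin k) (Fin d) ℝ) :
    Prop :=
  ∀ (τ : Equiv.Perm (Fin m)) (Z : Matrix (Fin k) (Fin d) ℝ) (X : Matrix (Fin m) (Fin d) ℝ),
    f Z (τ.permMatrix ℝ * X) = f Z X
/-- The linearized FACTS recurrence: `Z_0` is the initial memory and
`Z_s = Ā(Z_0, X_s) ⊙ Z_{s-1} + B̄(Z_0, X_s) ⊙ U(Z_0, X_s)` for `s ≥ 1`. -/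
def factsState {k m d : ℕ}
    (Abar Bbar U : Matrix (Fin k) (Fin d) ℝ → Matrix (Fin m) (Fin d) ℝ → Matrix (Fin k) (Fin d) ℝ)
    (Z0 : Matrix (Fin k) (Fin d) ℝ) (X : ℕ → Matrix (Fin m) (Fin d) ℝ) :
    ℕ → Matrix (Fin k) (Fin d) ℝ
  | 0 => Z0
  | s + 1 =>
      Abar Z0 (X (s + 1)) ⊙ factsState Abar Bbar U Z0 X s
        + Bbar Z0 (X (s + 1)) ⊙ U Z0 (X (s + 1))

theorem Matrix.permMatrix_mul_hadamard {l n α : Type*} [Fintype l] [DecidableEq l]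
    [NonAssocSemiring α] (σ : Equiv.Perm l) (A B : Matrix l n α) :
    σ.permMatrix α * (A ⊙ B) = (σ.permMatrix α * A) ⊙ (σ.permMatrix α * B) := by
  simp only [Equiv.Perm.permMatrix, PEquiv.toMatrix_toPEquiv_mul, submatrix_hadamard]

theorem factsState_permMatrix_mul {k m d : ℕ}
    {Abar Bbar U : Matrix (Fin k) (Fin d) ℝ → Matrix (Fin m) (Fin d) ℝ → Matrix (Fin k) (Fin d) ℝ}
    (hA : LPE Abar) (hA' : RPI Abar) (hB : LPE Bbar) (hB' : RPI Bbar)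
    (hU : LPE U) (hU' : RPI U)
    (Z0 : Matrix (Fin k) (Fin d) ℝ) (X : ℕ → Matrix (Fin m) (Fin d) ℝ)
    (σZ : Equiv.Perm (Fin k)) (σX : ℕ → Equiv.Perm (Fin m)) (t : ℕ) :
    factsState Abar Bbar U (σZ.permMatrix ℝ * Z0) (fun s => (σX s).permMatrix ℝ * X s) t
      = σZ.permMatrix ℝ * factsState Abar Bbar U Z0 X t := by
  induction t with
  | zero => rfl
  | succ s ih =>
    rw [factsState, factsState, ih, hA', hB', hU', hA, hB, hU, Matrix.mul_add,
      Matrix.permMatrix_mul_hadamard, Matrix.permMatrix_mul_hadamard]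

/-- Permutation invariance of the decoded FACTS output `y_t = Dec(C̄(Z_0, X_t) ⊙ Z_t)`. -/
theorem stmt_14 {k m d n : ℕ} (t : ℕ)
    (Abar Bbar U Cbar :
      Matrix (Fin k) (Fin d) ℝ → Matrix (Fin m) (Fin d) ℝ → Matrix (Fin k) (Fin d) ℝ)
    (hA : LPE Abar ∧ RPI Abar) (hB : LPE Bbar ∧ RPI Bbar)
    (hU : LPE U ∧ RPI U) (hC : LPE Cbar ∧ RPI Cbar)
    (Dec : Matrix (Fin k) (Fin d) ℝ → Fin n → ℝ)
    (hDec : ∀ (σ : Equiv.Perm (Fin k)) (Z : Matrix (Fin k) (Fin d) ℝ),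
      Dec (σ.permMatrix ℝ * Z) = Dec Z)
    (Z0 : Matrix (Fin k) (Fin d) ℝ) (X : ℕ → Matrix (Fin m) (Fin d) ℝ)
    (σZ : Equiv.Perm (Fin k)) (σX : ℕ → Equiv.Perm (Fin m)) :
    Dec (Cbar (σZ.permMatrix ℝ * Z0) ((σX t).permMatrix ℝ * X t)
        ⊙ factsState Abar Bbar U (σZ.permMatrix ℝ * Z0)
            (fun s => (σX s).permMatrix ℝ * X s) t)
      = Dec (Cbar Z0 (X t) ⊙ factsState Abar Bbar U Z0 X t) := by
  rw [factsState_permMatrix_mul hA.1 hA.2 hB.1 hB.2 hU.1 hU.2, hC.2, hC.1,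
    ← Matrix.permMatrix_mul_hadamard, hDec]
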